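/- arXiv:1012.0291 — 5 statements merged into one kernel-verified Lean document; each statement's English description precedes it below -/
import Mathlib

section
/- For positive solutions (A,B,C) of A' = C/B + f, B' = C/A, C' = -C²/(AB) with f ≥ 0 on [0,∞), A and B are nondecreasing and C is nonincreasing; moreover C satisfies the lower bound C(t) ≥ A₀B₀C₀/(A₀B₀ + C₀ t) for all t ≥ 0. -/
/-!
`A` and `B` have nonnegative derivatives and `C` a nonpositive one, so they are monotone.
Since `A B` is then nondecreasing, `C' = -C²/(AB) ≥ -C²/(A₀B₀)`, i.e. `(1/C)' ≤ 1/(A₀B₀)`;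
integrating gives `1/C(t) ≤ 1/C₀ + t/(A₀B₀)`, which is the lower bound.
-/

open Set

theorem monotoneOn_of_hasDerivAt_nonneg {D : Set ℝ} (hD : Convex ℝ D) {f f' : ℝ → ℝ}
    (hf : ∀ x ∈ D, HasDerivAt f (f' x) x) (hf' : ∀ x ∈ D, 0 ≤ f' x) : MonotoneOn f D :=
  monotoneOn_of_hasDerivWithinAt_nonneg hD (fun x hx => (hf x hx).continuousAt.continuousWithinAt)
    (fun x hx => (hf x (interior_subset hx)).hasDerivWithinAt) (fun x hx => hf' x (interior_subset hx))

theorem antitoneOn_of_hasDerivAt_nonpos {D : Set ℝ} (hD : Convex ℝ D) {f f' : ℝ → ℝ}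
    (hf : ∀ x ∈ D, HasDerivAt f (f' x) x) (hf' : ∀ x ∈ D, f' x ≤ 0) : AntitoneOn f D :=
  antitoneOn_of_hasDerivWithinAt_nonpos hD (fun x hx => (hf x hx).continuousAt.continuousWithinAt)
    (fun x hx => (hf x (interior_subset hx)).hasDerivWithinAt) (fun x hx => hf' x (interior_subset hx))

/-- Comparison with the solution `m C(a) / (m + C(a) (t - a))` of the Riccati equation `y' = -y²/m`. -/
theorem le_of_hasDerivAt_ge_neg_sq_div {C C' : ℝ → ℝ} {m a : ℝ} (hm : 0 < m)
    (hpos : ∀ t ∈ Ici a, 0 < C t) (hC : ∀ t ∈ Ici a, HasDerivAt C (C' t) t)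
    (hC' : ∀ t ∈ Ici a, -C t ^ 2 / m ≤ C' t) :
    ∀ t ∈ Ici a, m * C a / (m + C a * (t - a)) ≤ C t := by
  have hmono : MonotoneOn (fun t => t / m - (C t)⁻¹) (Ici a) := by
    refine monotoneOn_of_hasDerivAt_nonneg (convex_Ici a)
      (fun t ht => ((hasDerivAt_id t).div_const m).sub ((hC t ht).inv (hpos t ht).ne')) ?_
    intro t ht
    have hCt := hpos t ht
    have : -(1 / m) ≤ C' t / C t ^ 2 := by
      rw [le_div_iff₀ (by positivity)]
      linarith [hC' t ht, show -C t ^ 2 / m = -(1 / m) * C t ^ 2 by ring]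
    simp only [neg_div, sub_neg_eq_add]
    linarith
  intro t ht
  have hCa := hpos a self_mem_Ici
  have hta : 0 ≤ t - a := sub_nonneg.2 ht
  have hrecip : (C t)⁻¹ ≤ (m + C a * (t - a)) / (m * C a) := by
    have := hmono self_mem_Ici ht ht
    have hsplit : (m + C a * (t - a)) / (m * C a) = (C a)⁻¹ + t / m - a / m := by
      field_simp
      ring
    simp only at this
    linarith
  have := (inv_le_comm₀ (hpos t ht) (by positivity)).1 hrecip
  rwa [inv_div] at this

/-- For the Nil³ `(RH)_c` system `A' = C/B + f`, `B' = C/A`, `C' = -C²/(AB)`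
with `f ≥ 0` on `[0,∞)`, `A` and `B` are nondecreasing, `C` is nonincreasing,
and `C(t) ≥ A₀B₀C₀/(A₀B₀ + C₀ t)`. -/
theorem nil3_monotonicity_and_C_lower_bound
    (A B C f : ℝ → ℝ)
    (hf : ∀ t ∈ Ici (0:ℝ), 0 ≤ f t)
    (hApos : ∀ t ∈ Ici (0:ℝ), 0 < A t)
    (hBpos : ∀ t ∈ Ici (0:ℝ), 0 < B t)
    (hCpos : ∀ t ∈ Ici (0:ℝ), 0 < C t)
    (hA : ∀ t ∈ Ici (0:ℝ), HasDerivAt A (C t / B t + f t) t)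
    (hB : ∀ t ∈ Ici (0:ℝ), HasDerivAt B (C t / A t) t)
    (hC : ∀ t ∈ Ici (0:ℝ), HasDerivAt C (-(C t) ^ 2 / (A t * B t)) t) :
    MonotoneOn A (Ici 0) ∧ MonotoneOn B (Ici 0) ∧ AntitoneOn C (Ici 0) ∧
    ∀ t ∈ Ici (0:ℝ), C t ≥ A 0 * B 0 * C 0 / (A 0 * B 0 + C 0 * t) := by
  have monA : MonotoneOn A (Ici 0) := monotoneOn_of_hasDerivAt_nonneg (convex_Ici 0) hA
    fun t ht => add_nonneg (div_pos (hCpos t ht) (hBpos t ht)).le (hf t ht)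
  have monB : MonotoneOn B (Ici 0) := monotoneOn_of_hasDerivAt_nonneg (convex_Ici 0) hB
    fun t ht => (div_pos (hCpos t ht) (hApos t ht)).le
  have antC : AntitoneOn C (Ici 0) := antitoneOn_of_hasDerivAt_nonpos (convex_Ici 0) hC
    fun t ht => div_nonpos_of_nonpos_of_nonneg (neg_nonpos.2 (sq_nonneg _))
      (mul_pos (hApos t ht) (hBpos t ht)).le
  have hAB : ∀ t ∈ Ici (0:ℝ), A 0 * B 0 ≤ A t * B t := fun t ht =>
    mul_le_mul (monA self_mem_Ici ht ht) (monB self_mem_Ici ht ht) (hBpos 0 self_mem_Ici).le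
      (hApos t ht).le
  have hC' : ∀ t ∈ Ici (0:ℝ), -C t ^ 2 / (A 0 * B 0) ≤ -C t ^ 2 / (A t * B t) := fun t ht => by
    simp only [neg_div, neg_le_neg_iff]
    exact div_le_div_of_nonneg_left (sq_nonneg _)
      (mul_pos (hApos 0 self_mem_Ici) (hBpos 0 self_mem_Ici)) (hAB t ht)
  refine ⟨monA, monB, antC, fun t ht => ?_⟩
  simpa using le_of_hasDerivAt_ge_neg_sq_div
    (mul_pos (hApos 0 self_mem_Ici) (hBpos 0 self_mem_Ici)) hCpos hC hC' t ht
end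

section
/- For positive solutions of A' = C/B + f, B' = C/A, C' = -C²/(AB) with f ≥ 0, setting Φ = B₀C₀ one has C' = -C³/(ΦA) ≥ -C³/(ΦA₀), which implies C(t)² ≥ ΦA₀C₀²/(ΦA₀ + 2C₀² t) for t ≥ 0, and hence ∫₀^t C(s)² ds → ∞ as t → ∞. -/
open Set Filter MeasureTheory intervalIntegral

lemma nil3_aux_mono {g g' : ℝ → ℝ} (h : ∀ t ∈ Ici (0:ℝ), HasDerivAt g (g' t) t)
    (h0 : ∀ t ∈ Ici (0:ℝ), 0 ≤ g' t) : MonotoneOn g (Ici 0) := by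
  apply monotoneOn_of_deriv_nonneg (convex_Ici 0)
  · exact fun x hx => (h x hx).continuousAt.continuousWithinAt
  · intro x hx
    rw [interior_Ici] at hx
    exact ((h x (mem_Ici.mpr (le_of_lt hx))).differentiableAt).differentiableWithinAt
  · intro x hx
    rw [interior_Ici] at hx
    rw [(h x (mem_Ici.mpr (le_of_lt hx))).deriv]
    exact h0 x (mem_Ici.mpr (le_of_lt hx))

lemma nil3_div_aux
    (C : ℝ → ℝ) (K : ℝ) (Q : ℝ)
    (hKpos : 0 < K) (hQpos : 0 < Q)
    (hCcont : ∀ t ∈ Ici (0:ℝ), ContinuousAt C t)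
    (hbound : ∀ t ∈ Ici (0:ℝ), K * Q / (K + 2 * Q * t) ≤ C t ^ 2) :
    Tendsto (fun t => ∫ s in (0:ℝ)..t, C s ^ 2) atTop atTop := by
  set F : ℝ → ℝ := fun s => K / 2 * Real.log (K + 2 * Q * s) with hF
  have key : ∀ t : ℝ, 0 ≤ t → F t - F 0 ≤ ∫ s in (0:ℝ)..t, C s ^ 2 := by
    intro t ht
    have huIcc : uIcc (0:ℝ) t = Icc 0 t := uIcc_of_le ht
    have hden : ∀ s ∈ Icc (0:ℝ) t, 0 < K + 2 * Q * s := by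
      intro s hs
      nlinarith [hs.1]
    have hφcont : ContinuousOn (fun s => K * Q / (K + 2 * Q * s)) (Icc 0 t) := by
      apply ContinuousOn.div continuousOn_const
      · fun_prop
      · exact fun s hs => (hden s hs).ne'
    have hInt2 : IntervalIntegrable (fun s => K * Q / (K + 2 * Q * s)) volume 0 t := by
      rw [← huIcc] at hφcont
      exact hφcont.intervalIntegrable
    have hInt1 : IntervalIntegrable (fun s => C s ^ 2) volume 0 t := by
      apply ContinuousOn.intervalIntegrable
      rw [huIcc]
      intro s hs
      exact (ContinuousAt.pow (hCcont s hs.1) 2).continuousWithinAt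
    have hFd : ∀ s ∈ uIcc (0:ℝ) t, HasDerivAt F (K * Q / (K + 2 * Q * s)) s := by
      intro s hs
      rw [huIcc] at hs
      have h1 : HasDerivAt (fun s => K + 2 * Q * s) (2 * Q) s := by
        simpa using ((hasDerivAt_id s).const_mul (2 * Q)).const_add K
      have h2 := (h1.log (hden s hs).ne').const_mul (K / 2)
      have he : K / 2 * (2 * Q / (K + 2 * Q * s)) = K * Q / (K + 2 * Q * s) := by
        field_simp [(hden s hs).ne']
      rwa [he] at h2
    have heq : ∫ s in (0:ℝ)..t, K * Q / (K + 2 * Q * s) = F t - F 0 :=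
      intervalIntegral.integral_eq_sub_of_hasDerivAt hFd hInt2
    rw [← heq]
    apply intervalIntegral.integral_mono_on ht hInt2 hInt1
    exact fun s hs => hbound s hs.1
  have hFt : Tendsto (fun t => F t - F 0) atTop atTop := by
    apply tendsto_atTop_add_const_right
    apply Tendsto.const_mul_atTop (by positivity : (0:ℝ) < K / 2)
    apply Real.tendsto_log_atTop.comp
    apply tendsto_atTop_add_const_left
    exact Tendsto.const_mul_atTop (by positivity) tendsto_id
  apply tendsto_atTop_mono' atTop _ hFt
  filter_upwards [eventually_ge_atTop (0:ℝ)] with t ht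
  exact key t ht

/-- For the Nil³ `(RH)_c` system, with `Φ = B₀C₀`, one has
`C(t)² ≥ ΦA₀C₀²/(ΦA₀ + 2C₀²t)`, and hence `∫₀^t C(s)² ds → ∞` as `t → ∞`. -/
theorem nil3_Csq_lower_bound_and_divergence
    (A B C f : ℝ → ℝ)
    (hf : ∀ t ∈ Ici (0:ℝ), 0 ≤ f t)
    (hApos : ∀ t ∈ Ici (0:ℝ), 0 < A t)
    (hBpos : ∀ t ∈ Ici (0:ℝ), 0 < B t)
    (hCpos : ∀ t ∈ Ici (0:ℝ), 0 < C t)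
    (hA : ∀ t ∈ Ici (0:ℝ), HasDerivAt A (C t / B t + f t) t)
    (hB : ∀ t ∈ Ici (0:ℝ), HasDerivAt B (C t / A t) t)
    (hC : ∀ t ∈ Ici (0:ℝ), HasDerivAt C (-(C t) ^ 2 / (A t * B t)) t) :
    (∀ t ∈ Ici (0:ℝ),
      C t ^ 2 ≥ (B 0 * C 0) * A 0 * C 0 ^ 2 / ((B 0 * C 0) * A 0 + 2 * C 0 ^ 2 * t)) ∧
    Tendsto (fun t => ∫ s in (0:ℝ)..t, C s ^ 2) atTop atTop := by
  have hA0 : 0 < A 0 := hApos 0 self_mem_Ici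
  have hB0 : 0 < B 0 := hBpos 0 self_mem_Ici
  have hC0 : 0 < C 0 := hCpos 0 self_mem_Ici
  set K : ℝ := A 0 * (B 0 * C 0) with hK
  have hKpos : 0 < K := by positivity
  -- A is monotone
  have hAmono : MonotoneOn A (Ici 0) := by
    apply nil3_aux_mono hA
    intro t ht
    have := hCpos t ht; have := hBpos t ht; have := hf t ht
    positivity
  -- Φ = B*C is constant
  have hPhi : ∀ t ∈ Ici (0:ℝ), B t * C t = B 0 * C 0 := by
    have hd : ∀ t ∈ Ici (0:ℝ), HasDerivAt (fun t => B t * C t) 0 t := by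
      intro t ht
      have h := (hB t ht).mul (hC t ht)
      have he : C t / A t * C t + B t * (-(C t) ^ 2 / (A t * B t)) = 0 := by
        field_simp [(hApos t ht).ne', (hBpos t ht).ne']
        ring
      rwa [he] at h
    have h1 : MonotoneOn (fun t => B t * C t) (Ici 0) :=
      nil3_aux_mono (g' := fun _ => 0) hd (fun _ _ => le_rfl)
    have h2 : MonotoneOn (fun t => -(B t * C t)) (Ici 0) := by
      apply nil3_aux_mono (g' := fun _ => 0) _ (fun _ _ => le_rfl)
      intro t ht
      have h := (hd t ht).neg
      rw [neg_zero] at h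
      exact h
    intro t ht
    have := h1 self_mem_Ici ht ht
    have := h2 self_mem_Ici ht ht
    simp only at *
    linarith
  -- the inverse-square bound
  have hinv : ∀ t ∈ Ici (0:ℝ), (C t ^ 2)⁻¹ ≤ (C 0 ^ 2)⁻¹ + 2 * t / K := by
    have hg : MonotoneOn (fun t => 2 / K * t - (C t ^ 2)⁻¹) (Ici 0) := by
      apply nil3_aux_mono (g' := fun t => 2 / K - 2 / (A t * B t * C t))
      · intro t ht
        have hCt := hCpos t ht
        have hAt := hApos t ht
        have hBt := hBpos t ht
        have h1 : HasDerivAt (fun t => (C t ^ 2)⁻¹)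
            (-(2 * C t ^ 1 * (-(C t) ^ 2 / (A t * B t))) / (C t ^ 2) ^ 2) t := by
          exact ((hC t ht).pow 2).inv (pow_ne_zero 2 hCt.ne')
        have h2 : HasDerivAt (fun t => 2 / K * t) (2 / K) t := by
          simpa using (hasDerivAt_id t).const_mul (2 / K)
        have h3 := h2.sub h1
        have he : 2 / K - -(2 * C t ^ 1 * (-(C t) ^ 2 / (A t * B t))) / (C t ^ 2) ^ 2
            = 2 / K - 2 / (A t * B t * C t) := by
          field_simp
        rwa [he] at h3
      · intro t ht
        have hle : K ≤ A t * B t * C t := by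
          rw [mul_assoc, hPhi t ht, hK]
          have : A 0 ≤ A t := hAmono self_mem_Ici ht ht
          nlinarith [mul_pos hB0 hC0]
        have h2 : 2 / (A t * B t * C t) ≤ 2 / K := by
          gcongr
        linarith
    intro t ht
    have := hg self_mem_Ici ht ht
    simp only at this
    have : 2 / K * 0 - (C 0 ^ 2)⁻¹ ≤ 2 / K * t - (C t ^ 2)⁻¹ := this
    have heq : 2 / K * t = 2 * t / K := by ring
    linarith [heq ▸ this]
  -- conclude the lower bound
  have hbd : ∀ t ∈ Ici (0:ℝ),
      C t ^ 2 ≥ (B 0 * C 0) * A 0 * C 0 ^ 2 / ((B 0 * C 0) * A 0 + 2 * C 0 ^ 2 * t) := by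
    intro t ht
    have hCt := hCpos t ht
    have ht' : (0:ℝ) ≤ t := ht
    have hKt : 0 < K + 2 * C 0 ^ 2 * t := by nlinarith [sq_nonneg (C 0)]
    rw [ge_iff_le, show (B 0 * C 0) * A 0 = K by rw [hK]; ring, div_le_iff₀ hKt]
    have h1 := hinv t ht
    have h4 : 1 ≤ C t ^ 2 * ((C 0 ^ 2)⁻¹ + 2 * t / K) := by
      calc (1:ℝ) = C t ^ 2 * (C t ^ 2)⁻¹ := by
            rw [mul_inv_cancel₀ (by positivity : C t ^ 2 ≠ 0)]
      _ ≤ _ := by gcongr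
    have h5 : C 0 ^ 2 * K * 1 ≤ C 0 ^ 2 * K * (C t ^ 2 * ((C 0 ^ 2)⁻¹ + 2 * t / K)) := by
      gcongr
    have h6 : C 0 ^ 2 * K * (C t ^ 2 * ((C 0 ^ 2)⁻¹ + 2 * t / K))
        = C t ^ 2 * (K + 2 * C 0 ^ 2 * t) := by
      field_simp
    rw [h6] at h5
    nlinarith
  refine ⟨hbd, ?_⟩
  apply nil3_div_aux C K (C 0 ^ 2) hKpos (by positivity)
    (fun t ht => (hC t ht).continuousAt)
  intro t ht
  have := hbd t ht
  have he : K * C 0 ^ 2 / (K + 2 * C 0 ^ 2 * t)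
      = (B 0 * C 0) * A 0 * C 0 ^ 2 / ((B 0 * C 0) * A 0 + 2 * C 0 ^ 2 * t) := by
    rw [hK]; ring_nf
  rw [he]
  exact this
end

section
/- For positive solutions of A' = C/B + f, B' = C/A, C' = -C²/(AB) with 0 ≤ f(t) ≤ f₀, the integrated formula A(t) = A₀ + (1/Φ)∫₀^t C(s)² ds + ∫₀^t f(s) ds holds (where Φ = B₀C₀), and consequently A(t) ≤ A₀ + (C₀/B₀ + f₀) t for all t ≥ 0. -/
/-!
Along the flow `(B C)' = (C/A) C - B C²/(A B) = 0`, so `Φ = B C` is conserved and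
`A' = C/B + f = C²/Φ + f`; integrating gives the formula. Since `C' ≤ 0`, `C ≤ C₀` and
`∫₀ᵗ C² ≤ C₀² t`, while `C₀²/Φ = C₀/B₀`.
-/

open Set Filter MeasureTheory intervalIntegral

theorem uIcc_subset_Ici_of_le {α : Type*} [LinearOrder α] {a b : α} (h : a ≤ b) :
    uIcc a b ⊆ Ici a := by
  rw [uIcc_of_le h]; exact Icc_subset_Ici_self

theorem eq_apply_zero_of_hasDerivAt_zero_on_Ici {g : ℝ → ℝ}
    (hg : ∀ t ∈ Ici (0:ℝ), HasDerivAt g 0 t) {t : ℝ} (ht : t ∈ Ici (0:ℝ)) : g t = g 0 :=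
  constant_of_has_deriv_right_zero
    (fun s hs => (hg s hs.1).continuousAt.continuousWithinAt)
    (fun s hs => (hg s hs.1).hasDerivWithinAt) t ⟨ht, le_rfl⟩

theorem apply_eq_add_integral_of_hasDerivAt_on_Ici {g g' : ℝ → ℝ}
    (hg : ∀ t ∈ Ici (0:ℝ), HasDerivAt g (g' t) t) (hg' : ContinuousOn g' (Ici 0))
    {t : ℝ} (ht : t ∈ Ici (0:ℝ)) : g t = g 0 + ∫ s in (0:ℝ)..t, g' s := by
  have hsub := uIcc_subset_Ici_of_le (mem_Ici.1 ht)
  rw [integral_eq_sub_of_hasDerivAt (fun s hs => hg s (hsub hs))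
    ((hg'.mono hsub).intervalIntegrable)]
  ring

theorem integral_le_mul_of_le_on_Icc {g : ℝ → ℝ} {c t : ℝ} (ht : 0 ≤ t)
    (hg : IntervalIntegrable g volume 0 t) (hgc : ∀ s ∈ Icc 0 t, g s ≤ c) :
    ∫ s in (0:ℝ)..t, g s ≤ c * t := by
  simpa [mul_comm] using integral_mono_on ht hg intervalIntegrable_const hgc

namespace Nil3

variable {A B C : ℝ → ℝ}

theorem mul_eq_mul_apply_zero (hB0 : ∀ t ∈ Ici (0:ℝ), B t ≠ 0)
    (hB : ∀ t ∈ Ici (0:ℝ), HasDerivAt B (C t / A t) t)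
    (hC : ∀ t ∈ Ici (0:ℝ), HasDerivAt C (-(C t) ^ 2 / (A t * B t)) t)
    {t : ℝ} (ht : t ∈ Ici (0:ℝ)) : B t * C t = B 0 * C 0 := by
  refine eq_apply_zero_of_hasDerivAt_zero_on_Ici (g := fun s => B s * C s) (fun s hs => ?_) ht
  refine ((hB s hs).mul (hC s hs)).congr_deriv ?_
  rw [← div_div, mul_div_cancel₀ _ (hB0 s hs)]
  ring

theorem antitoneOn (hAB : ∀ t ∈ Ici (0:ℝ), 0 < A t * B t)
    (hC : ∀ t ∈ Ici (0:ℝ), HasDerivAt C (-(C t) ^ 2 / (A t * B t)) t) :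
    AntitoneOn C (Ici 0) := by
  refine antitoneOn_of_hasDerivWithinAt_nonpos (convex_Ici 0)
    (fun t ht => (hC t ht).continuousAt.continuousWithinAt)
    (fun t ht => (hC t (interior_subset ht)).hasDerivWithinAt) (fun t ht => ?_)
  have ht := interior_subset ht
  exact div_nonpos_of_nonpos_of_nonneg (neg_nonpos.2 (sq_nonneg _)) (hAB t ht).le

theorem apply_eq_integral_formula {f : ℝ → ℝ} (hfc : ContinuousOn f (Ici 0))
    (hB0 : ∀ t ∈ Ici (0:ℝ), B t ≠ 0) (hC0 : ∀ t ∈ Ici (0:ℝ), C t ≠ 0)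
    (hA : ∀ t ∈ Ici (0:ℝ), HasDerivAt A (C t / B t + f t) t)
    (hB : ∀ t ∈ Ici (0:ℝ), HasDerivAt B (C t / A t) t)
    (hC : ∀ t ∈ Ici (0:ℝ), HasDerivAt C (-(C t) ^ 2 / (A t * B t)) t)
    {t : ℝ} (ht : t ∈ Ici (0:ℝ)) :
    A t = A 0 + (1 / (B 0 * C 0)) * (∫ s in (0:ℝ)..t, C s ^ 2) + ∫ s in (0:ℝ)..t, f s := by
  have hC2c : ContinuousOn (fun s => C s ^ 2 / (B 0 * C 0)) (Ici 0) :=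
    ((HasDerivAt.continuousOn hC).pow 2).div_const _
  have hA' : ∀ s ∈ Ici (0:ℝ), HasDerivAt A (C s ^ 2 / (B 0 * C 0) + f s) s := by
    intro s hs
    convert hA s hs using 2
    rw [← mul_eq_mul_apply_zero hB0 hB hC hs]
    field_simp [hC0 s hs]
  have hsub := uIcc_subset_Ici_of_le (mem_Ici.1 ht)
  rw [apply_eq_add_integral_of_hasDerivAt_on_Ici hA' (hC2c.add hfc) ht,
    integral_add (hC2c.mono hsub).intervalIntegrable (hfc.mono hsub).intervalIntegrable,
    intervalIntegral.integral_div]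
  ring

end Nil3

/-- For the Nil³ `(RH)_c` system with `0 ≤ f ≤ f₀`, the integrated formula
`A(t) = A₀ + (1/Φ)∫₀^t C² + ∫₀^t f` holds with `Φ = B₀C₀`, and consequently
`A(t) ≤ A₀ + (C₀/B₀ + f₀)t`. -/
theorem nil3_A_integral_formula_and_linear_bound
    (A B C f : ℝ → ℝ) (f₀ : ℝ)
    (hf : ∀ t ∈ Ici (0:ℝ), 0 ≤ f t ∧ f t ≤ f₀)
    (hfc : ContinuousOn f (Ici 0))
    (hApos : ∀ t ∈ Ici (0:ℝ), 0 < A t)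
    (hBpos : ∀ t ∈ Ici (0:ℝ), 0 < B t)
    (hCpos : ∀ t ∈ Ici (0:ℝ), 0 < C t)
    (hA : ∀ t ∈ Ici (0:ℝ), HasDerivAt A (C t / B t + f t) t)
    (hB : ∀ t ∈ Ici (0:ℝ), HasDerivAt B (C t / A t) t)
    (hC : ∀ t ∈ Ici (0:ℝ), HasDerivAt C (-(C t) ^ 2 / (A t * B t)) t) :
    (∀ t ∈ Ici (0:ℝ),
      A t = A 0 + (1 / (B 0 * C 0)) * (∫ s in (0:ℝ)..t, C s ^ 2)
              + ∫ s in (0:ℝ)..t, f s) ∧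
    ∀ t ∈ Ici (0:ℝ), A t ≤ A 0 + (C 0 / B 0 + f₀) * t := by
  have h0 : (0:ℝ) ∈ Ici 0 := mem_Ici.2 le_rfl
  have hCc : ContinuousOn C (Ici 0) := HasDerivAt.continuousOn hC
  have formula : ∀ t ∈ Ici (0:ℝ), _ := fun t ht => Nil3.apply_eq_integral_formula hfc
    (fun s hs => (hBpos s hs).ne') (fun s hs => (hCpos s hs).ne') hA hB hC ht
  refine ⟨formula, fun t ht => ?_⟩
  have hsub := uIcc_subset_Ici_of_le (mem_Ici.1 ht)
  have hCanti := Nil3.antitoneOn (fun s hs => mul_pos (hApos s hs) (hBpos s hs)) hC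
  have hC2 : ∫ s in (0:ℝ)..t, C s ^ 2 ≤ C 0 ^ 2 * t :=
    integral_le_mul_of_le_on_Icc ht ((hCc.pow 2).mono hsub).intervalIntegrable fun s hs =>
      pow_le_pow_left₀ (hCpos s hs.1).le (hCanti h0 hs.1 hs.1) 2
  have hfint : ∫ s in (0:ℝ)..t, f s ≤ f₀ * t :=
    integral_le_mul_of_le_on_Icc ht (hfc.mono hsub).intervalIntegrable fun s hs => (hf s hs.1).2
  have hΦ : 0 < B 0 * C 0 := mul_pos (hBpos 0 h0) (hCpos 0 h0)
  calc A t ≤ A 0 + (1 / (B 0 * C 0)) * (C 0 ^ 2 * t) + f₀ * t := by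
        rw [formula t ht]; gcongr
    _ = A 0 + (C 0 / B 0 + f₀) * t := by field_simp; ring
end

section
/- For positive solutions of A' = C/B + f, B' = C/A, C' = -C²/(AB) with 0 ≤ f ≤ f₀, one has ∫₀^t ds/A(s) ≥ ∫₀^t ds/(A₀ + (C₀/B₀ + f₀)s), which tends to infinity as t → ∞; consequently B(t)² = B₀² + 2Φ ∫₀^t ds/A(s) → ∞ and C(t) = Φ/B(t) → 0 as t → ∞. -/
open Set Filter MeasureTheory intervalIntegral

/-!
Along a positive solution, `Φ = BC` is conserved because `(BC)' = C²/A - C²/A = 0`; hence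
`C = Φ/B` and `(B²)' = 2BC/A = 2Φ/A`. Since `B' = C/A ≥ 0`, `B` is nondecreasing, so
`C/B = Φ/B² ≤ C₀/B₀` and `A' ≤ C₀/B₀ + f₀`, which gives the linear bound on `A`. The integral of
`1/A` therefore dominates a logarithmically divergent integral, so `B² → ∞` and `C = Φ/B → 0`.
-/

theorem monotoneOn_Ici_of_hasDerivAt_nonneg {F F' : ℝ → ℝ} {a : ℝ}
    (hF : ∀ t ∈ Ici a, HasDerivAt F (F' t) t) (hF' : ∀ t ∈ Ici a, 0 ≤ F' t) :
    MonotoneOn F (Ici a) :=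
  monotoneOn_of_hasDerivWithinAt_nonneg (convex_Ici a)
    (fun t ht => (hF t ht).continuousAt.continuousWithinAt)
    (fun t ht => (hF t (interior_subset ht)).hasDerivWithinAt)
    (fun t ht => hF' t (interior_subset ht))

theorem eq_of_hasDerivAt_zero_Ici {F : ℝ → ℝ} {a : ℝ} (hF : ∀ t ∈ Ici a, HasDerivAt F 0 t) :
    ∀ t ∈ Ici a, F t = F a := by
  intro t ht
  have hmono := monotoneOn_Ici_of_hasDerivAt_nonneg hF fun _ _ => le_rfl
  have hanti := monotoneOn_Ici_of_hasDerivAt_nonneg (F := -F) (F' := fun _ => -0)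
    (fun s hs => (hF s hs).neg) fun _ _ => neg_zero.ge
  have h₁ := hmono self_mem_Ici ht ht
  have h₂ := hanti self_mem_Ici ht ht
  simp only [Pi.neg_apply, neg_le_neg_iff] at h₂
  exact le_antisymm h₂ h₁

theorem le_add_mul_of_hasDerivAt_le {F F' : ℝ → ℝ} {k : ℝ}
    (hF : ∀ t ∈ Ici (0:ℝ), HasDerivAt F (F' t) t) (hle : ∀ t ∈ Ici (0:ℝ), F' t ≤ k) :
    ∀ t ∈ Ici (0:ℝ), F t ≤ F 0 + k * t := by
  intro t ht
  have hmono : MonotoneOn (fun s => k * s - F s) (Ici 0) :=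
    monotoneOn_Ici_of_hasDerivAt_nonneg
      (fun s hs => ((hasDerivAt_id s).const_mul k).sub (hF s hs))
      (fun s hs => by simpa using hle s hs)
  have := hmono self_mem_Ici ht ht
  simp only [mul_zero, zero_sub] at this
  linarith

theorem div_le_div_of_mul_eq_mul {b c b₀ c₀ : ℝ} (hb₀ : 0 < b₀) (hc₀ : 0 ≤ c₀) (hb : b₀ ≤ b)
    (h : b * c = b₀ * c₀) : c / b ≤ c₀ / b₀ := by
  have hbpos : 0 < b := hb₀.trans_le hb
  rw [div_le_div_iff₀ hbpos hb₀]
  refine le_of_mul_le_mul_left ?_ hbpos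
  nlinarith [mul_le_mul hb hb hb₀.le hbpos.le]

theorem intervalIntegrable_one_div_of_continuousOn_Ici {g : ℝ → ℝ}
    (hg : ContinuousOn g (Ici 0)) (hg₀ : ∀ t ∈ Ici (0:ℝ), g t ≠ 0) {t : ℝ} (ht : 0 ≤ t) :
    IntervalIntegrable (fun s => 1 / g s) volume 0 t := by
  have hsub : uIcc 0 t ⊆ Ici 0 := by
    rw [uIcc_of_le ht]
    exact Icc_subset_Ici_self
  exact (continuousOn_const.div (hg.mono hsub) fun s hs => hg₀ s (hsub hs)).intervalIntegrable

theorem integral_one_div_le_integral_one_div {g h : ℝ → ℝ}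
    (hg : ContinuousOn g (Ici 0)) (hh : ContinuousOn h (Ici 0))
    (hg₀ : ∀ t ∈ Ici (0:ℝ), 0 < g t) (hgh : ∀ t ∈ Ici (0:ℝ), g t ≤ h t) {t : ℝ} (ht : 0 ≤ t) :
    ∫ s in (0:ℝ)..t, 1 / h s ≤ ∫ s in (0:ℝ)..t, 1 / g s :=
  integral_mono_on ht
    (intervalIntegrable_one_div_of_continuousOn_Ici hh
      (fun s hs => ((hg₀ s hs).trans_le (hgh s hs)).ne') ht)
    (intervalIntegrable_one_div_of_continuousOn_Ici hg (fun s hs => (hg₀ s hs).ne') ht)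
    fun s hs => one_div_le_one_div_of_le (hg₀ s hs.1) (hgh s hs.1)

theorem integral_one_div_affine {a k t : ℝ} (ha : 0 < a) (hk : 0 < k) (ht : 0 ≤ t) :
    ∫ s in (0:ℝ)..t, 1 / (a + k * s) = k⁻¹ * Real.log ((a + k * t) / a) := by
  rw [integral_comp_add_mul (fun x => 1 / x) hk.ne', mul_zero, add_zero,
    integral_one_div_of_pos ha (by positivity), smul_eq_mul]

theorem tendsto_integral_one_div_affine_atTop {a k : ℝ} (ha : 0 < a) (hk : 0 < k) :
    Tendsto (fun t => ∫ s in (0:ℝ)..t, 1 / (a + k * s)) atTop atTop := by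
  have haffine : Tendsto (fun t => (a + k * t) / a) atTop atTop :=
    (tendsto_atTop_add_const_left _ a (tendsto_id.const_mul_atTop hk)).atTop_div_const ha
  refine ((Real.tendsto_log_atTop.comp haffine).const_mul_atTop (inv_pos.mpr hk)).congr' ?_
  filter_upwards [eventually_ge_atTop 0] with t ht
  exact (integral_one_div_affine ha hk ht).symm

theorem tendsto_atTop_of_sq_eq_add_mul {u I : ℝ → ℝ} {c d : ℝ} (hd : 0 < d)
    (hI : Tendsto I atTop atTop) (hu₀ : ∀ t ∈ Ici (0:ℝ), 0 ≤ u t)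
    (hu : ∀ t ∈ Ici (0:ℝ), u t ^ 2 = c + d * I t) : Tendsto u atTop atTop := by
  refine (Real.tendsto_sqrt_atTop.comp
    (tendsto_atTop_add_const_left _ c (hI.const_mul_atTop hd))).congr' ?_
  filter_upwards [eventually_ge_atTop 0] with t ht
  rw [Function.comp_apply, ← hu t ht, Real.sqrt_sq (hu₀ t ht)]

section Nil3

variable {A B C : ℝ → ℝ}

theorem mul_eq_mul_of_hasDerivAt
    (hA_ne : ∀ t ∈ Ici (0:ℝ), A t ≠ 0) (hB_ne : ∀ t ∈ Ici (0:ℝ), B t ≠ 0)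
    (hB : ∀ t ∈ Ici (0:ℝ), HasDerivAt B (C t / A t) t)
    (hC : ∀ t ∈ Ici (0:ℝ), HasDerivAt C (-(C t) ^ 2 / (A t * B t)) t) :
    ∀ t ∈ Ici (0:ℝ), B t * C t = B 0 * C 0 := by
  refine eq_of_hasDerivAt_zero_Ici fun t ht => ((hB t ht).mul (hC t ht)).congr_deriv ?_
  have := hA_ne t ht
  have := hB_ne t ht
  field_simp
  ring

theorem sq_eq_sq_add_integral_of_hasDerivAt {Φ : ℝ} (hAc : ContinuousOn A (Ici 0))
    (hA_ne : ∀ t ∈ Ici (0:ℝ), A t ≠ 0) (hB : ∀ t ∈ Ici (0:ℝ), HasDerivAt B (C t / A t) t)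
    (hΦ : ∀ t ∈ Ici (0:ℝ), B t * C t = Φ) :
    ∀ t ∈ Ici (0:ℝ), B t ^ 2 = B 0 ^ 2 + 2 * Φ * ∫ s in (0:ℝ)..t, 1 / A s := by
  intro t ht
  have hderiv : ∀ s ∈ uIcc 0 t, HasDerivAt (fun s => B s ^ 2) (2 * Φ * (1 / A s)) s := by
    intro s hs
    rw [uIcc_of_le ht] at hs
    refine ((hB s hs.1).pow 2).congr_deriv ?_
    have := hA_ne s hs.1
    rw [← hΦ s hs.1]
    field_simp
    ring
  have hint := (intervalIntegrable_one_div_of_continuousOn_Ici hAc hA_ne ht).const_mul (2 * Φ)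
  rw [← intervalIntegral.integral_const_mul, integral_eq_sub_of_hasDerivAt hderiv hint]
  ring

end Nil3

/-- For the Nil³ `(RH)_c` system with `0 ≤ f ≤ f₀`:
`∫₀^t ds/A(s) ≥ ∫₀^t ds/(A₀ + (C₀/B₀ + f₀)s)`, which tends to infinity;
`B(t)² = B₀² + 2Φ∫₀^t ds/A(s) → ∞`; and `C(t) = Φ/B(t) → 0` as `t → ∞`. -/
theorem nil3_B_blowup_C_decay
    (A B C f : ℝ → ℝ) (f₀ : ℝ)
    (hf : ∀ t ∈ Ici (0:ℝ), 0 ≤ f t ∧ f t ≤ f₀)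
    (hApos : ∀ t ∈ Ici (0:ℝ), 0 < A t)
    (hBpos : ∀ t ∈ Ici (0:ℝ), 0 < B t)
    (hCpos : ∀ t ∈ Ici (0:ℝ), 0 < C t)
    (hA : ∀ t ∈ Ici (0:ℝ), HasDerivAt A (C t / B t + f t) t)
    (hB : ∀ t ∈ Ici (0:ℝ), HasDerivAt B (C t / A t) t)
    (hC : ∀ t ∈ Ici (0:ℝ), HasDerivAt C (-(C t) ^ 2 / (A t * B t)) t) :
    (∀ t ∈ Ici (0:ℝ),
      (∫ s in (0:ℝ)..t, 1 / A s) ≥ ∫ s in (0:ℝ)..t, 1 / (A 0 + (C 0 / B 0 + f₀) * s)) ∧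
    Tendsto (fun t => ∫ s in (0:ℝ)..t, 1 / A s) atTop atTop ∧
    (∀ t ∈ Ici (0:ℝ),
      B t ^ 2 = B 0 ^ 2 + 2 * (B 0 * C 0) * ∫ s in (0:ℝ)..t, 1 / A s) ∧
    Tendsto B atTop atTop ∧
    (∀ t ∈ Ici (0:ℝ), C t = (B 0 * C 0) / B t) ∧
    Tendsto C atTop (nhds 0) := by
  have h0 : (0:ℝ) ∈ Ici 0 := self_mem_Ici
  have hAc : ContinuousOn A (Ici 0) := fun t ht => (hA t ht).continuousAt.continuousWithinAt
  have hΦ := mul_eq_mul_of_hasDerivAt (fun t ht => (hApos t ht).ne') (fun t ht => (hBpos t ht).ne')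
    hB hC
  have hC_eq : ∀ t ∈ Ici (0:ℝ), C t = B 0 * C 0 / B t := fun t ht =>
    eq_div_of_mul_eq (hBpos t ht).ne' (by rw [mul_comm]; exact hΦ t ht)
  have hB_mono : MonotoneOn B (Ici 0) := monotoneOn_Ici_of_hasDerivAt_nonneg hB
    fun t ht => (div_pos (hCpos t ht) (hApos t ht)).le
  have hA_le : ∀ t ∈ Ici (0:ℝ), A t ≤ A 0 + (C 0 / B 0 + f₀) * t :=
    le_add_mul_of_hasDerivAt_le hA fun t ht => add_le_add
      (div_le_div_of_mul_eq_mul (hBpos 0 h0) (hCpos 0 h0).le (hB_mono h0 ht ht) (hΦ t ht))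
      (hf t ht).2
  have hk : 0 < C 0 / B 0 + f₀ :=
    add_pos_of_pos_of_nonneg (div_pos (hCpos 0 h0) (hBpos 0 h0)) ((hf 0 h0).1.trans (hf 0 h0).2)
  have hlower : ∀ t ∈ Ici (0:ℝ), (∫ s in (0:ℝ)..t, 1 / A s) ≥
      ∫ s in (0:ℝ)..t, 1 / (A 0 + (C 0 / B 0 + f₀) * s) := fun t ht =>
    integral_one_div_le_integral_one_div hAc (by fun_prop) hApos hA_le ht
  have hdiv : Tendsto (fun t => ∫ s in (0:ℝ)..t, 1 / A s) atTop atTop :=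
    tendsto_atTop_mono' _ (eventually_ge_atTop 0 |>.mono hlower)
      (tendsto_integral_one_div_affine_atTop (hApos 0 h0) hk)
  have hB_sq := sq_eq_sq_add_integral_of_hasDerivAt hAc (fun t ht => (hApos t ht).ne') hB hΦ
  have hB_top : Tendsto B atTop atTop := tendsto_atTop_of_sq_eq_add_mul
    (mul_pos two_pos (mul_pos (hBpos 0 h0) (hCpos 0 h0))) hdiv (fun t ht => (hBpos t ht).le) hB_sq
  refine ⟨hlower, hdiv, hB_sq, hB_top, hC_eq, ?_⟩
  refine ((tendsto_const_nhds (x := B 0 * C 0)).div_atTop hB_top).congr' ?_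
  filter_upwards [eventually_ge_atTop 0] with t ht
  exact (hC_eq t ht).symm
end

section
/- For positive solutions of A' = C/B + f₀, B' = C/A, C' = -C²/(AB) with constant f₀ > 0, A(t)/(f₀ t) → 1 as t → ∞; i.e., A(t) ~ f₀ t. -/
/-!
With `h = B / C` one computes `h' = 2 / A` and `A' = 1 / h + f₀`. As `h` increases, `A' ≤ M` for a
constant `M`, so `A ≤ A 0 + M t` and `h' ≥ 2 / (A 0 + M t)`, which forces `h → ∞` logarithmically.
Hence `A' → f₀`, and the mean value theorem gives `A t - f₀ t = o(t)`.
-/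

open Set Filter Topology Asymptotics

lemma monotoneOn_Ici_of_hasDerivAt_nonneg_s11 {f f' : ℝ → ℝ} {a : ℝ}
    (hf : ∀ t ∈ Ici a, HasDerivAt f (f' t) t) (hf' : ∀ t ∈ Ici a, 0 ≤ f' t) :
    MonotoneOn f (Ici a) :=
  monotoneOn_of_hasDerivWithinAt_nonneg (convex_Ici a)
    (fun t ht => (hf t ht).continuousAt.continuousWithinAt)
    (fun t ht => (hf t (interior_subset ht)).hasDerivWithinAt)
    (fun t ht => hf' t (interior_subset ht))

lemma sub_le_sub_of_hasDerivAt_le {f g f' g' : ℝ → ℝ} {a t : ℝ}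
    (hf : ∀ x ∈ Ici a, HasDerivAt f (f' x) x) (hg : ∀ x ∈ Ici a, HasDerivAt g (g' x) x)
    (hle : ∀ x ∈ Ici a, f' x ≤ g' x) (ht : a ≤ t) : f t - f a ≤ g t - g a := by
  have hmono : MonotoneOn (fun x => g x - f x) (Ici a) :=
    monotoneOn_Ici_of_hasDerivAt_nonneg_s11 (fun x hx => (hg x hx).sub (hf x hx))
      (fun x hx => sub_nonneg.mpr (hle x hx))
  have := hmono self_mem_Ici ht ht
  linarith

lemma tendsto_atTop_of_div_affine_le_deriv {h h' : ℝ → ℝ} {a b c : ℝ}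
    (ha : 0 < a) (hb : 0 < b) (hc : 0 < c) (hh : ∀ t ∈ Ici 0, HasDerivAt h (h' t) t)
    (hle : ∀ t ∈ Ici 0, c / (a + b * t) ≤ h' t) :
    Tendsto h atTop atTop := by
  set g : ℝ → ℝ := fun t => c / b * Real.log (a + b * t)
  have hg : ∀ t ∈ Ici (0 : ℝ), HasDerivAt g (c / (a + b * t)) t := by
    intro t ht
    have hpos : 0 < a + b * t := by
      have : 0 ≤ b * t := mul_nonneg hb.le ht
      linarith
    have := ((((hasDerivAt_id' t).const_mul b).const_add a).log hpos.ne').const_mul (c / b)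
    exact this.congr_deriv (by field_simp)
  have hg_top : Tendsto g atTop atTop :=
    (Real.tendsto_log_atTop.comp (tendsto_atTop_add_const_left _ _
      (tendsto_id.const_mul_atTop hb))).const_mul_atTop (div_pos hc hb)
  refine tendsto_atTop_mono' atTop ?_ (tendsto_atTop_add_const_left _ (h 0 - g 0) hg_top)
  filter_upwards [eventually_ge_atTop 0] with t ht
  have := sub_le_sub_of_hasDerivAt_le hg hh hle ht
  linarith

lemma isLittleO_id_of_hasDerivAt_tendsto_zero {f f' : ℝ → ℝ}
    (hf : ∀ᶠ t in atTop, HasDerivAt f (f' t) t) (hf' : Tendsto f' atTop (𝓝 0)) :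
    f =o[atTop] id := by
  rw [isLittleO_iff]
  intro ε hε
  obtain ⟨T, hT⟩ := eventually_atTop.1 <| (eventually_ge_atTop 0).and <|
    hf.and (hf'.eventually (Metric.closedBall_mem_nhds 0 (half_pos hε)))
  have hT0 : 0 ≤ T := (hT T le_rfl).1
  have hlip : ∀ t ∈ Ici T, ‖f t - f T‖ ≤ ε / 2 * ‖t - T‖ := fun t ht =>
    (convex_Ici T).norm_image_sub_le_of_norm_hasDerivWithin_le
      (fun x hx => (hT x hx).2.1.hasDerivWithinAt)
      (fun x hx => by simpa using (hT x hx).2.2) self_mem_Ici ht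
  filter_upwards [eventually_ge_atTop T, eventually_ge_atTop (2 * ‖f T‖ / ε)] with t htT htf
  have hfT : ‖f T‖ ≤ ε / 2 * t := by
    rw [div_le_iff₀ hε] at htf
    linarith
  have hft := hlip t htT
  rw [Real.norm_of_nonneg (sub_nonneg.mpr htT)] at hft
  calc ‖f t‖ ≤ ‖f t - f T‖ + ‖f T‖ := norm_le_norm_sub_add _ _
    _ ≤ ε * ‖id t‖ := by
      rw [id, Real.norm_of_nonneg (hT0.trans htT)]
      nlinarith

lemma isLittleO_sub_mul_of_hasDerivAt_inv_add {A h : ℝ → ℝ} {c f₀ : ℝ} (hc : 0 < c)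
    (hf₀ : 0 ≤ f₀) (hApos : ∀ t ∈ Ici (0 : ℝ), 0 < A t) (hhpos : ∀ t ∈ Ici (0 : ℝ), 0 < h t)
    (hA : ∀ t ∈ Ici (0 : ℝ), HasDerivAt A ((h t)⁻¹ + f₀) t)
    (hh : ∀ t ∈ Ici (0 : ℝ), HasDerivAt h (c / A t) t) :
    (fun t => A t - f₀ * t) =o[atTop] id := by
  have hmono : MonotoneOn h (Ici 0) :=
    monotoneOn_Ici_of_hasDerivAt_nonneg_s11 hh fun t ht => (div_pos hc (hApos t ht)).le
  have hh0 := hhpos 0 self_mem_Ici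
  set M := (h 0)⁻¹ + f₀
  have hM : 0 < M := by positivity
  have hA_le : ∀ t ∈ Ici 0, A t ≤ A 0 + M * t := fun t ht => by
    have := sub_le_sub_of_hasDerivAt_le hA (fun x _ => (hasDerivAt_id x).const_mul M)
      (fun x hx => by
        have := inv_anti₀ hh0 (hmono self_mem_Ici hx hx)
        simp only [mul_one, M]
        linarith) ht
    simp only [id, mul_zero, sub_zero] at this
    linarith
  have h_top : Tendsto h atTop atTop :=
    tendsto_atTop_of_div_affine_le_deriv (hApos 0 self_mem_Ici) hM hc hh
      fun t ht => div_le_div_of_nonneg_left hc.le (hApos t ht) (hA_le t ht)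
  refine isLittleO_id_of_hasDerivAt_tendsto_zero (f' := fun t => (h t)⁻¹) ?_
    h_top.inv_tendsto_atTop
  filter_upwards [eventually_ge_atTop 0] with t ht
  exact ((hA t ht).sub ((hasDerivAt_id t).const_mul f₀)).congr_deriv (by ring)

/-- For the Nil³ `(RH)_c` system with constant coupling `f₀ > 0`,
`A(t)/(f₀t) → 1` as `t → ∞`; i.e., `A(t) ~ f₀t`. -/
theorem nil3_constant_coupling_A_asymptotics
    (A B C : ℝ → ℝ) (f₀ : ℝ) (hf₀ : 0 < f₀)
    (hApos : ∀ t ∈ Ici (0:ℝ), 0 < A t)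
    (hBpos : ∀ t ∈ Ici (0:ℝ), 0 < B t)
    (hCpos : ∀ t ∈ Ici (0:ℝ), 0 < C t)
    (hA : ∀ t ∈ Ici (0:ℝ), HasDerivAt A (C t / B t + f₀) t)
    (hB : ∀ t ∈ Ici (0:ℝ), HasDerivAt B (C t / A t) t)
    (hC : ∀ t ∈ Ici (0:ℝ), HasDerivAt C (-(C t) ^ 2 / (A t * B t)) t) :
    Tendsto (fun t => A t / (f₀ * t)) atTop (nhds 1) := by
  set h : ℝ → ℝ := fun t => B t / C t
  have hh : ∀ t ∈ Ici (0:ℝ), HasDerivAt h (2 / A t) t := fun t ht => by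
    refine ((hB t ht).div (hC t ht) (hCpos t ht).ne').congr_deriv ?_
    have := (hApos t ht).ne'
    have := (hBpos t ht).ne'
    have := (hCpos t ht).ne'
    field_simp
    ring
  have hA' : ∀ t ∈ Ici (0:ℝ), HasDerivAt A ((h t)⁻¹ + f₀) t := fun t ht => by
    simpa only [h, inv_div] using hA t ht
  have hequiv : A ~[atTop] fun t => f₀ * t :=
    (isLittleO_sub_mul_of_hasDerivAt_inv_add two_pos hf₀.le hApos
      (fun t ht => div_pos (hBpos t ht) (hCpos t ht)) hA' hh).trans_isBigO
      (isBigO_self_const_mul hf₀.ne' id atTop)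
  refine (isEquivalent_iff_tendsto_one ?_).1 hequiv
  filter_upwards [eventually_gt_atTop 0] with t ht
  positivity
end
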